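/- arXiv:1905.07047 — 4 statements merged into one kernel-verified Lean document; each statement's English description precedes it below -/
import Mathlib

section
/- Let m ≥ 2 and n, d ≥ 1 be integers, and let A₁, …, A_m be n×n real matrices such that each A_r has at most d nonzero entries and every entry of every A_r has absolute value at most 1. Then |tr(A₁·A₂⋯A_m)| ≤ d^{m/2}. -/
attribute [local instance] Matrix.frobeniusSeminormedAddCommGroup Matrix.frobeniusNormedRing

open Finset in
/-- The Frobenius norm as a square root of the sum of squared entries. -/
lemma frob_norm_eq_sqrt {n : ℕ} (B : Matrix (Fin n) (Fin n) ℝ) :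
    ‖B‖ = Real.sqrt (∑ p : Fin n × Fin n, (B p.1 p.2) ^ 2) := by
  rw [Matrix.frobenius_norm_def, ← Real.sqrt_eq_rpow]
  congr 1
  rw [← Finset.sum_product', Finset.univ_product_univ]
  refine Finset.sum_congr rfl fun p _ => ?_
  rw [Real.norm_eq_abs, Real.rpow_two, sq_abs]

/-- Cauchy–Schwarz for the trace of a product, with Frobenius norms. -/
lemma trace_mul_le_frob {n : ℕ} (B C : Matrix (Fin n) (Fin n) ℝ) :
    |Matrix.trace (B * C)| ≤ ‖B‖ * ‖C‖ := by
  have htr : Matrix.trace (B * C) = ∑ p : Fin n × Fin n, B p.1 p.2 * C p.2 p.1 := by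
    have h1 : Matrix.trace (B * C) = ∑ i : Fin n, ∑ j : Fin n, B i j * C j i := by
      simp [Matrix.trace, Matrix.diag, Matrix.mul_apply]
    rw [h1, ← Finset.sum_product', Finset.univ_product_univ]
  rw [htr, frob_norm_eq_sqrt, frob_norm_eq_sqrt]
  calc |∑ p : Fin n × Fin n, B p.1 p.2 * C p.2 p.1|
      ≤ ∑ p : Fin n × Fin n, |B p.1 p.2| * |C p.2 p.1| := by
        refine (Finset.abs_sum_le_sum_abs _ _).trans (le_of_eq ?_)
        simp [abs_mul]
    _ ≤ Real.sqrt (∑ p : Fin n × Fin n, |B p.1 p.2| ^ 2) *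
        Real.sqrt (∑ p : Fin n × Fin n, |C p.2 p.1| ^ 2) :=
        Real.sum_mul_le_sqrt_mul_sqrt _ _ _
    _ = Real.sqrt (∑ p : Fin n × Fin n, (B p.1 p.2) ^ 2) *
        Real.sqrt (∑ p : Fin n × Fin n, (C p.1 p.2) ^ 2) := by
        congr 1
        · simp [sq_abs]
        · congr 1
          rw [← Fintype.sum_equiv (Equiv.prodComm (Fin n) (Fin n))
            (fun p => (C p.1 p.2) ^ 2) (fun p => |C p.2 p.1| ^ 2)]
          intro p
          simp [sq_abs]

/-- Let `m ≥ 2` and `n, d ≥ 1` be integers, and let `A₁, …, A_m` be `n×n`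
real matrices such that each `A_r` has at most `d` nonzero entries and every entry of every
`A_r` has absolute value at most `1`.  Then `|tr(A₁ ⋯ A_m)| ≤ d^(m/2)`. -/
theorem stmt0 (m n d : ℕ) (hm : 2 ≤ m) (hn : 1 ≤ n) (hd : 1 ≤ d)
    (A : Fin m → Matrix (Fin n) (Fin n) ℝ)
    (hsupp : ∀ r : Fin m,
      (Finset.univ.filter fun p : Fin n × Fin n => A r p.1 p.2 ≠ 0).card ≤ d)
    (hbd : ∀ (r : Fin m) (i j : Fin n), |A r i j| ≤ 1) :
    |Matrix.trace (List.ofFn A).prod| ≤ (d : ℝ) ^ ((m : ℝ) / 2) := by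
  -- each matrix has Frobenius norm at most √d
  have hAle : ∀ r : Fin m, ‖A r‖ ≤ Real.sqrt d := by
    intro r
    rw [frob_norm_eq_sqrt]
    apply Real.sqrt_le_sqrt
    calc ∑ p : Fin n × Fin n, (A r p.1 p.2) ^ 2
        = ∑ p ∈ Finset.univ.filter (fun p : Fin n × Fin n => A r p.1 p.2 ≠ 0),
            (A r p.1 p.2) ^ 2 := by
          refine (Finset.sum_filter_of_ne fun p _ h => ?_).symm
          exact fun h0 => h (by rw [h0]; ring)
      _ ≤ ∑ p ∈ Finset.univ.filter (fun p : Fin n × Fin n => A r p.1 p.2 ≠ 0), 1 := by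
          refine Finset.sum_le_sum fun p _ => ?_
          have := hbd r p.1 p.2
          nlinarith [abs_nonneg (A r p.1 p.2), sq_abs (A r p.1 p.2)]
      _ ≤ d := by
          rw [Finset.sum_const, nsmul_eq_mul, mul_one]
          exact_mod_cast hsupp r
  -- product of the tail
  have hprod : ∀ (k : ℕ) (B : Fin (k+1) → Matrix (Fin n) (Fin n) ℝ),
      (∀ r, ‖B r‖ ≤ Real.sqrt d) → ‖(List.ofFn B).prod‖ ≤ Real.sqrt d ^ (k+1) := by
    intro k
    induction k with
    | zero =>
      intro B hB
      simpa using hB 0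
    | succ k ih =>
      intro B hB
      rw [List.ofFn_succ, List.prod_cons]
      calc ‖B 0 * (List.ofFn fun i : Fin (k+1) => B i.succ).prod‖
          ≤ ‖B 0‖ * ‖(List.ofFn fun i : Fin (k+1) => B i.succ).prod‖ := norm_mul_le _ _
        _ ≤ Real.sqrt d * Real.sqrt d ^ (k+1) :=
            mul_le_mul (hB 0) (ih _ fun r => hB _) (norm_nonneg _) (Real.sqrt_nonneg _)
        _ = Real.sqrt d ^ (k+1+1) := by ring
  obtain ⟨k, rfl⟩ : ∃ k, m = k + 2 := ⟨m - 2, by omega⟩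
  rw [List.ofFn_succ, List.prod_cons]
  have key : |Matrix.trace (A 0 * (List.ofFn fun i : Fin (k+1) => A i.succ).prod)|
      ≤ Real.sqrt d ^ (k+2) := by
    calc |Matrix.trace (A 0 * (List.ofFn fun i : Fin (k+1) => A i.succ).prod)|
        ≤ ‖A 0‖ * ‖(List.ofFn fun i : Fin (k+1) => A i.succ).prod‖ := trace_mul_le_frob _ _
      _ ≤ Real.sqrt d * Real.sqrt d ^ (k+1) :=
          mul_le_mul (hAle 0) (hprod k _ fun r => hAle _) (norm_nonneg _) (Real.sqrt_nonneg _)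
      _ = Real.sqrt d ^ (k+2) := by ring
  refine key.trans (le_of_eq ?_)
  rw [Real.sqrt_eq_rpow, ← Real.rpow_natCast ((d:ℝ) ^ (1/2:ℝ)) (k+2),
    ← Real.rpow_mul (by positivity)]
  push_cast
  ring_nf
end

section
/- 𝔼[Σ_{i,j,k} J(i,j,k)·F_i(v)·F_j(v)·F_k(v)] = (1/64)·Σ_{i,j,k,l,m,n} J(i,j,k)·J(i,l,m)·J(j,m,n)·J(k,n,l), where both sums range over all tuples of indices in Fin N. -/
/-- A degree-`D` MAX-3-LIN-2 instance on `N` spins: `J` takes values in `{-1, 0, +1}`,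
is symmetric under all permutations of its three arguments, vanishes whenever two
indices coincide, and every spin participates in exactly `D` distinct terms
(`∑_{j,k} J(i,j,k)² = 2·D` for every `i`). -/
def IsMax3Lin2 (N D : ℕ) (J : Fin N → Fin N → Fin N → ℝ) : Prop :=
  (∀ i j k, J i j k = -1 ∨ J i j k = 0 ∨ J i j k = 1) ∧
  (∀ i j k, J i j k = J j i k) ∧
  (∀ i j k, J i j k = J i k j) ∧
  (∀ i j k, (i = j ∨ i = k ∨ j = k) → J i j k = 0) ∧
  (∀ i, ∑ j, ∑ k, (J i j k) ^ 2 = 2 * D)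

/-- The random vector associated to a choice of signs: each coordinate is `+1/2` or `-1/2`. -/
noncomputable def signedVec {N : ℕ} (s : Fin N → Bool) : Fin N → ℝ :=
  fun i => if s i then 1 / 2 else -(1 / 2)

/-- Expectation over a random vector `v : Fin N → ℝ` whose coordinates are independent
and uniform on `{-1/2, +1/2}`: average over all `2^N` sign patterns. -/
noncomputable def expect (N : ℕ) (f : (Fin N → ℝ) → ℝ) : ℝ :=
  (∑ s : Fin N → Bool, f (signedVec s)) / 2 ^ N

/-- The force `F_i(v) = (1/2)·∑_{j,k} J(i,j,k)·v_j·v_k`. -/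
noncomputable def force {N : ℕ} (J : Fin N → Fin N → Fin N → ℝ)
    (v : Fin N → ℝ) (i : Fin N) : ℝ :=
  (1 / 2) * ∑ j, ∑ k, J i j k * v j * v k

/- ### Auxiliary machinery -/

/-- Multiplicity of `x` in the list `[a, b, c, d, e, f]`. -/
def cnt6 {N : ℕ} (a b c d e f x : Fin N) : ℕ :=
  (if x = a then 1 else 0) + (if x = b then 1 else 0) + (if x = c then 1 else 0)
  + (if x = d then 1 else 0) + (if x = e then 1 else 0) + (if x = f then 1 else 0)

section Aux
variable {N : ℕ}

lemma prod_pow_single (v : Fin N → ℝ) (y : Fin N) :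
    ∏ x, v x ^ (if x = y then 1 else 0) = v y := by
  simp [pow_ite, Finset.prod_ite_eq']

lemma prod_pow_cnt6 (v : Fin N → ℝ) (a b c d e f : Fin N) :
    ∏ x, v x ^ cnt6 a b c d e f x = v a * v b * v c * v d * v e * v f := by
  simp only [cnt6, pow_add, Finset.prod_mul_distrib, prod_pow_single]

lemma sum_cnt6 (a b c d e f : Fin N) : ∑ x, cnt6 a b c d e f x = 6 := by
  simp [cnt6, Finset.sum_add_distrib, Finset.sum_ite_eq']

lemma bool_sum_pow (n : ℕ) : ∑ b : Bool, (if b then (1/2 : ℝ) else -(1/2)) ^ n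
    = if Even n then 2 * (1/2)^n else 0 := by
  rcases Nat.even_or_odd n with h|h
  · rw [if_pos h]; simp [h.neg_pow]
  · rw [if_neg (Nat.not_even_iff_odd.mpr h)]; simp [h.neg_pow]

lemma expect_six (a b c d e f : Fin N) :
    expect N (fun v => v a * v b * v c * v d * v e * v f)
      = if (∀ x, Even (cnt6 a b c d e f x)) then (1/64 : ℝ) else 0 := by
  unfold expect
  have h1 : ∀ s : Fin N → Bool,
      signedVec s a * signedVec s b * signedVec s c * signedVec s d * signedVec s e
        * signedVec s f = ∏ x, signedVec s x ^ cnt6 a b c d e f x :=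
    fun s => (prod_pow_cnt6 (signedVec s) a b c d e f).symm
  simp only [h1]
  have h2 : (∑ s : Fin N → Bool, ∏ x, signedVec s x ^ cnt6 a b c d e f x)
      = ∏ x, ∑ t : Bool, (if t then (1/2:ℝ) else -(1/2)) ^ cnt6 a b c d e f x :=
    (Fintype.prod_sum (fun x (t : Bool) => (if t then (1/2:ℝ) else -(1/2)) ^ cnt6 a b c d e f x)).symm
  rw [h2]
  simp only [bool_sum_pow]
  by_cases hall : ∀ x, Even (cnt6 a b c d e f x)
  · rw [if_pos hall]
    rw [Finset.prod_congr rfl (fun x _ => if_pos (hall x))]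
    rw [Finset.prod_mul_distrib, Finset.prod_const, Finset.prod_pow_eq_pow_sum, sum_cnt6]
    rw [Finset.card_univ, Fintype.card_fin]
    rw [div_eq_iff (by positivity : (2:ℝ)^N ≠ 0)]
    ring
  · rw [if_neg hall]
    push_neg at hall
    obtain ⟨x0, hx0⟩ := hall
    rw [Finset.prod_eq_zero (Finset.mem_univ x0)
      (if_neg hx0 : (if Even (cnt6 a b c d e f x0) then 2 * (1/2:ℝ) ^ cnt6 a b c d e f x0 else 0) = 0)]
    simp

lemma expect_six' (a b c d e f : Fin N) :
    expect N (fun v => v a * (v b * (v c * (v d * (v e * v f)))))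
      = if (∀ x, Even (cnt6 a b c d e f x)) then (1/64 : ℝ) else 0 := by
  rw [show (fun v : Fin N → ℝ => v a * (v b * (v c * (v d * (v e * v f)))))
      = fun v => v a * v b * v c * v d * v e * v f by funext v; ring]
  exact expect_six a b c d e f

lemma evenAll_iff {a b c d e f : Fin N} (hab : a ≠ b) (hcd : c ≠ d) (hef : e ≠ f) :
    (∀ x, Even (cnt6 a b c d e f x)) ↔
      ((a=c∧b=e∧d=f) ∨ (a=c∧b=f∧d=e) ∨ (a=d∧b=e∧c=f) ∨ (a=d∧b=f∧c=e) ∨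
       (a=e∧b=c∧d=f) ∨ (a=e∧b=d∧c=f) ∨ (a=f∧b=c∧d=e) ∨ (a=f∧b=d∧c=e)) := by
  constructor
  · intro h
    by_cases hac : a = c
    · subst hac
      by_cases hbe : b = e
      · subst hbe
        by_cases hdf : d = f
        · exact Or.inl ⟨rfl, rfl, hdf⟩
        · exfalso; have hd := h d
          simp [cnt6, Ne.symm hcd, hdf, Nat.even_iff] at hd; omega
      · by_cases hbf : b = f
        · subst hbf
          by_cases hde : d = e
          · exact Or.inr (Or.inl ⟨rfl, rfl, hde⟩)
          · exfalso; have hd := h d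
            simp [cnt6, Ne.symm hcd, hde, Nat.even_iff] at hd; omega
        · exfalso
          by_cases hbd : b = d
          · subst hbd
            have he := h e
            simp [cnt6, Ne.symm hbe, hef, Nat.even_iff] at he; omega
          · have hb := h b
            simp [cnt6, Ne.symm hab, hbd, hbe, hbf, Nat.even_iff] at hb
    · by_cases had : a = d
      · subst had
        by_cases hbe : b = e
        · subst hbe
          by_cases hcf : c = f
          · exact Or.inr (Or.inr (Or.inl ⟨rfl, rfl, hcf⟩))
          · exfalso; have hc := h c
            simp [cnt6, hcd, hcf, Nat.even_iff] at hc; omega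
        · by_cases hbf : b = f
          · subst hbf
            by_cases hce : c = e
            · exact Or.inr (Or.inr (Or.inr (Or.inl ⟨rfl, rfl, hce⟩)))
            · exfalso; have hc := h c
              simp [cnt6, hcd, hce, Nat.even_iff] at hc; omega
          · exfalso
            by_cases hbd : b = c
            · subst hbd
              have he := h e
              simp [cnt6, Ne.symm hbe, hef, Nat.even_iff] at he; omega
            · have hb := h b
              simp [cnt6, Ne.symm hab, Ne.symm hbd, hbd, hbe, hbf, Nat.even_iff] at hb
      · by_cases hae : a = e
        · subst hae
          by_cases hbc : b = c
          · subst hbc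
            by_cases hdf : d = f
            · exact Or.inr (Or.inr (Or.inr (Or.inr (Or.inl ⟨rfl, rfl, hdf⟩))))
            · exfalso; have hd := h d
              simp [cnt6, Ne.symm had, hdf, Nat.even_iff] at hd; omega
          · by_cases hbd : b = d
            · subst hbd
              by_cases hcf : c = f
              · exact Or.inr (Or.inr (Or.inr (Or.inr (Or.inr (Or.inl ⟨rfl, rfl, hcf⟩)))))
              · exfalso; have hc := h c
                simp [cnt6, Ne.symm hac, hcf, Nat.even_iff] at hc; omega
            · exfalso
              by_cases hbf : b = f
              · subst hbf
                have hc := h c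
                simp [cnt6, Ne.symm hac, Ne.symm hbc, Ne.symm hcd, hcd, Nat.even_iff] at hc
              · have hb := h b
                simp [cnt6, Ne.symm hab, hbc, hbd, hbf, Nat.even_iff] at hb
        · by_cases haf : a = f
          · subst haf
            by_cases hbc : b = c
            · subst hbc
              by_cases hde : d = e
              · exact Or.inr (Or.inr (Or.inr (Or.inr (Or.inr (Or.inr (Or.inl ⟨rfl, rfl, hde⟩))))))
              · exfalso; have hd := h d
                simp [cnt6, Ne.symm had, hde, Nat.even_iff] at hd; omega
            · by_cases hbd : b = d
              · subst hbd
                by_cases hce : c = e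
                · exact Or.inr (Or.inr (Or.inr (Or.inr (Or.inr (Or.inr (Or.inr ⟨rfl, rfl, hce⟩))))))
                · exfalso; have hc := h c
                  simp [cnt6, Ne.symm hac, hce, Nat.even_iff] at hc; omega
              · exfalso
                by_cases hbe : b = e
                · subst hbe
                  have hc := h c
                  simp [cnt6, Ne.symm hac, Ne.symm hbc, Ne.symm hcd, hcd, Nat.even_iff] at hc
                · have hb := h b
                  simp [cnt6, Ne.symm hab, hbc, hbd, hbe, Nat.even_iff] at hb
          · exfalso
            have ha := h a
            simp [cnt6, hab, hac, had, hae, haf, Nat.even_iff] at ha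
  · rintro (⟨h1,h2,h3⟩|⟨h1,h2,h3⟩|⟨h1,h2,h3⟩|⟨h1,h2,h3⟩|⟨h1,h2,h3⟩|⟨h1,h2,h3⟩|⟨h1,h2,h3⟩|⟨h1,h2,h3⟩) <;>
      subst h1 <;> subst h2 <;> subst h3 <;> intro x <;>
      simp [cnt6, Nat.even_iff] <;> omega

lemma ind_eq_sum {a b c d e f : Fin N} (hab : a ≠ b) (hcd : c ≠ d) (hef : e ≠ f) :
    (if (∀ x, Even (cnt6 a b c d e f x)) then (1/64:ℝ) else 0)
    = (1/64) * (((if a=c∧b=e∧d=f then (1:ℝ) else 0) + (if a=c∧b=f∧d=e then 1 else 0)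
      + (if a=d∧b=e∧c=f then 1 else 0) + (if a=d∧b=f∧c=e then 1 else 0)
      + (if a=e∧b=c∧d=f then 1 else 0) + (if a=e∧b=d∧c=f then 1 else 0)
      + (if a=f∧b=c∧d=e then 1 else 0) + (if a=f∧b=d∧c=e then 1 else 0))) := by
  by_cases h : ∀ x, Even (cnt6 a b c d e f x)
  · rw [if_pos h]
    rcases (evenAll_iff hab hcd hef).mp h with
      ⟨h1,h2,h3⟩|⟨h1,h2,h3⟩|⟨h1,h2,h3⟩|⟨h1,h2,h3⟩|⟨h1,h2,h3⟩|⟨h1,h2,h3⟩|⟨h1,h2,h3⟩|⟨h1,h2,h3⟩ <;>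
      subst h1 <;> subst h2 <;> subst h3 <;>
      simp [hab, hcd, hef, Ne.symm hab, Ne.symm hcd, Ne.symm hef]
  · rw [if_neg h]
    have h2 : ¬_ := fun hd => h ((evenAll_iff hab hcd hef).mpr hd)
    simp only [not_or] at h2
    obtain ⟨n1,n2,n3,n4,n5,n6,n7,n8⟩ := h2
    simp [n1,n2,n3,n4,n5,n6,n7,n8]

lemma expect_sum' {ι : Type*} (s : Finset ι) (g : ι → (Fin N → ℝ) → ℝ) :
    expect N (fun v => ∑ i ∈ s, g i v) = ∑ i ∈ s, expect N (g i) := by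
  unfold expect
  rw [Finset.sum_comm, Finset.sum_div]

lemma expect_const_mul (C : ℝ) (g : (Fin N → ℝ) → ℝ) :
    expect N (fun v => C * g v) = C * expect N g := by
  unfold expect
  rw [← Finset.mul_sum, mul_div_assoc]

lemma expand_prod (J : Fin N → Fin N → Fin N → ℝ) (i j k : Fin N) (v : Fin N → ℝ) :
    J i j k * force J v i * force J v j * force J v k
      = ∑ a, ∑ b, ∑ c, ∑ d, ∑ e, ∑ f,
          ((J i j k * (1/8)) * (J i a b * J j c d * J k e f))
            * (v a * v b * v c * v d * v e * v f) := by
  rw [show J i j k * force J v i * force J v j * force J v k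
      = J i j k * force J v k * force J v j * force J v i by ring]
  simp only [force, Finset.mul_sum, Finset.sum_mul]
  refine Finset.sum_congr rfl fun a _ => ?_
  refine Finset.sum_congr rfl fun b _ => ?_
  refine Finset.sum_congr rfl fun c _ => ?_
  refine Finset.sum_congr rfl fun d _ => ?_
  refine Finset.sum_congr rfl fun e _ => ?_
  refine Finset.sum_congr rfl fun f _ => ?_
  ring

lemma term_eval (J : Fin N → Fin N → Fin N → ℝ) (i j k : Fin N) :
    expect N (fun v => J i j k * force J v i * force J v j * force J v k)
      = (J i j k * (1/8)) * ∑ a, ∑ b, ∑ c, ∑ d, ∑ e, ∑ f,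
          (J i a b * J j c d * J k e f)
            * (if (∀ x, Even (cnt6 a b c d e f x)) then (1/64 : ℝ) else 0) := by
  simp only [expand_prod J i j k]
  simp only [expect_sum', mul_assoc, expect_const_mul, expect_six']
  simp only [← Finset.mul_sum]

lemma ite_conj3 {p q r : Prop} [Decidable p] [Decidable q] [Decidable r] :
    (if p ∧ q ∧ r then (1:ℝ) else 0)
      = (if p then (1:ℝ) else 0) * ((if q then (1:ℝ) else 0) * (if r then (1:ℝ) else 0)) := by
  by_cases hp : p <;> by_cases hq : q <;> by_cases hr : r <;> simp [hp, hq, hr]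

lemma sum_ite_const {α : Type*} {p : Prop} [Decidable p] {s : Finset α} (f : α → ℝ) :
    ∑ x ∈ s, (if p then f x else 0) = if p then ∑ x ∈ s, f x else 0 := by
  split <;> simp

end Aux

section Collapse
variable {N : ℕ} (J : Fin N → Fin N → Fin N → ℝ)

lemma col1 (hsym : ∀ i j k, J i j k = J i k j) (i j k : Fin N) :
    ∑ a, ∑ b, ∑ c, ∑ d, ∑ e, ∑ f, (J i a b * J j c d * J k e f)
        * (if a=c ∧ b=e ∧ d=f then (1:ℝ) else 0)
      = ∑ l, ∑ m, ∑ n, J i l m * J j m n * J k n l := by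
  have h : ∑ a, ∑ b, ∑ c, ∑ d, ∑ e, ∑ f, (J i a b * J j c d * J k e f)
        * (if a=c ∧ b=e ∧ d=f then (1:ℝ) else 0)
      = ∑ a, ∑ b, ∑ d, J i a b * J j a d * J k b d := by
    simp only [ite_conj3, mul_ite, ite_mul, mul_one, mul_zero, one_mul, zero_mul,
      Finset.sum_ite_eq, Finset.mem_univ, if_true, sum_ite_const]
  rw [h, Finset.sum_comm]
  refine Finset.sum_congr rfl fun l _ => Finset.sum_congr rfl fun m _ =>
    Finset.sum_congr rfl fun n _ => ?_
  rw [hsym i m l, hsym k l n]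

lemma col2 (hsym : ∀ i j k, J i j k = J i k j) (i j k : Fin N) :
    ∑ a, ∑ b, ∑ c, ∑ d, ∑ e, ∑ f, (J i a b * J j c d * J k e f)
        * (if a=c ∧ b=f ∧ d=e then (1:ℝ) else 0)
      = ∑ l, ∑ m, ∑ n, J i l m * J j m n * J k n l := by
  have h : ∑ a, ∑ b, ∑ c, ∑ d, ∑ e, ∑ f, (J i a b * J j c d * J k e f)
        * (if a=c ∧ b=f ∧ d=e then (1:ℝ) else 0)
      = ∑ a, ∑ b, ∑ d, J i a b * J j a d * J k d b := by
    simp only [ite_conj3, mul_ite, ite_mul, mul_one, mul_zero, one_mul, zero_mul,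
      Finset.sum_ite_eq, Finset.mem_univ, if_true, sum_ite_const]
  rw [h, Finset.sum_comm]
  refine Finset.sum_congr rfl fun l _ => Finset.sum_congr rfl fun m _ =>
    Finset.sum_congr rfl fun n _ => ?_
  rw [hsym i m l]

lemma col3 (hsym : ∀ i j k, J i j k = J i k j) (i j k : Fin N) :
    ∑ a, ∑ b, ∑ c, ∑ d, ∑ e, ∑ f, (J i a b * J j c d * J k e f)
        * (if a=d ∧ b=e ∧ c=f then (1:ℝ) else 0)
      = ∑ l, ∑ m, ∑ n, J i l m * J j m n * J k n l := by
  have h : ∑ a, ∑ b, ∑ c, ∑ d, ∑ e, ∑ f, (J i a b * J j c d * J k e f)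
        * (if a=d ∧ b=e ∧ c=f then (1:ℝ) else 0)
      = ∑ a, ∑ b, ∑ c, J i a b * J j c a * J k b c := by
    simp only [ite_conj3, mul_ite, ite_mul, mul_one, mul_zero, one_mul, zero_mul,
      Finset.sum_ite_eq, Finset.mem_univ, if_true, sum_ite_const]
  rw [h, Finset.sum_comm]
  refine Finset.sum_congr rfl fun l _ => Finset.sum_congr rfl fun m _ =>
    Finset.sum_congr rfl fun n _ => ?_
  rw [hsym i m l, hsym j n m, hsym k l n]

lemma col4 (hsym : ∀ i j k, J i j k = J i k j) (i j k : Fin N) :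
    ∑ a, ∑ b, ∑ c, ∑ d, ∑ e, ∑ f, (J i a b * J j c d * J k e f)
        * (if a=d ∧ b=f ∧ c=e then (1:ℝ) else 0)
      = ∑ l, ∑ m, ∑ n, J i l m * J j m n * J k n l := by
  have h : ∑ a, ∑ b, ∑ c, ∑ d, ∑ e, ∑ f, (J i a b * J j c d * J k e f)
        * (if a=d ∧ b=f ∧ c=e then (1:ℝ) else 0)
      = ∑ a, ∑ b, ∑ c, J i a b * J j c a * J k c b := by
    simp only [ite_conj3, mul_ite, ite_mul, mul_one, mul_zero, one_mul, zero_mul,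
      Finset.sum_ite_eq, Finset.mem_univ, if_true, sum_ite_const]
  rw [h, Finset.sum_comm]
  refine Finset.sum_congr rfl fun l _ => Finset.sum_congr rfl fun m _ =>
    Finset.sum_congr rfl fun n _ => ?_
  rw [hsym i m l, hsym j n m]

lemma col5 (hsym : ∀ i j k, J i j k = J i k j) (i j k : Fin N) :
    ∑ a, ∑ b, ∑ c, ∑ d, ∑ e, ∑ f, (J i a b * J j c d * J k e f)
        * (if a=e ∧ b=c ∧ d=f then (1:ℝ) else 0)
      = ∑ l, ∑ m, ∑ n, J i l m * J j m n * J k n l := by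
  have h : ∑ a, ∑ b, ∑ c, ∑ d, ∑ e, ∑ f, (J i a b * J j c d * J k e f)
        * (if a=e ∧ b=c ∧ d=f then (1:ℝ) else 0)
      = ∑ a, ∑ b, ∑ d, J i a b * J j b d * J k a d := by
    simp only [ite_conj3, mul_ite, ite_mul, mul_one, mul_zero, one_mul, zero_mul,
      Finset.sum_ite_eq, Finset.mem_univ, if_true, sum_ite_const]
  rw [h]
  refine Finset.sum_congr rfl fun l _ => Finset.sum_congr rfl fun m _ =>
    Finset.sum_congr rfl fun n _ => ?_
  rw [hsym k l n]

lemma col6 (hsym : ∀ i j k, J i j k = J i k j) (i j k : Fin N) :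
    ∑ a, ∑ b, ∑ c, ∑ d, ∑ e, ∑ f, (J i a b * J j c d * J k e f)
        * (if a=e ∧ b=d ∧ c=f then (1:ℝ) else 0)
      = ∑ l, ∑ m, ∑ n, J i l m * J j m n * J k n l := by
  have h : ∑ a, ∑ b, ∑ c, ∑ d, ∑ e, ∑ f, (J i a b * J j c d * J k e f)
        * (if a=e ∧ b=d ∧ c=f then (1:ℝ) else 0)
      = ∑ a, ∑ b, ∑ c, J i a b * J j c b * J k a c := by
    simp only [ite_conj3, mul_ite, ite_mul, mul_one, mul_zero, one_mul, zero_mul,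
      Finset.sum_ite_eq, Finset.mem_univ, if_true, sum_ite_const]
  rw [h]
  refine Finset.sum_congr rfl fun l _ => Finset.sum_congr rfl fun m _ =>
    Finset.sum_congr rfl fun n _ => ?_
  rw [hsym j n m, hsym k l n]

lemma col7 (hsym : ∀ i j k, J i j k = J i k j) (i j k : Fin N) :
    ∑ a, ∑ b, ∑ c, ∑ d, ∑ e, ∑ f, (J i a b * J j c d * J k e f)
        * (if a=f ∧ b=c ∧ d=e then (1:ℝ) else 0)
      = ∑ l, ∑ m, ∑ n, J i l m * J j m n * J k n l := by
  have h : ∑ a, ∑ b, ∑ c, ∑ d, ∑ e, ∑ f, (J i a b * J j c d * J k e f)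
        * (if a=f ∧ b=c ∧ d=e then (1:ℝ) else 0)
      = ∑ a, ∑ b, ∑ d, J i a b * J j b d * J k d a := by
    simp only [ite_conj3, mul_ite, ite_mul, mul_one, mul_zero, one_mul, zero_mul,
      Finset.sum_ite_eq, Finset.mem_univ, if_true, sum_ite_const]
  rw [h]

lemma col8 (hsym : ∀ i j k, J i j k = J i k j) (i j k : Fin N) :
    ∑ a, ∑ b, ∑ c, ∑ d, ∑ e, ∑ f, (J i a b * J j c d * J k e f)
        * (if a=f ∧ b=d ∧ c=e then (1:ℝ) else 0)
      = ∑ l, ∑ m, ∑ n, J i l m * J j m n * J k n l := by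
  have h : ∑ a, ∑ b, ∑ c, ∑ d, ∑ e, ∑ f, (J i a b * J j c d * J k e f)
        * (if a=f ∧ b=d ∧ c=e then (1:ℝ) else 0)
      = ∑ a, ∑ b, ∑ c, J i a b * J j c b * J k c a := by
    simp only [ite_conj3, mul_ite, ite_mul, mul_one, mul_zero, one_mul, zero_mul,
      Finset.sum_ite_eq, Finset.mem_univ, if_true, sum_ite_const]
  rw [h]
  refine Finset.sum_congr rfl fun l _ => Finset.sum_congr rfl fun m _ =>
    Finset.sum_congr rfl fun n _ => ?_
  rw [hsym j n m]

end Collapse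

section Main
variable {N : ℕ}

lemma point (J : Fin N → Fin N → Fin N → ℝ) (hd : ∀ i x, J i x x = 0)
    (i j k a b c d e f : Fin N) :
    (J i a b * J j c d * J k e f)
        * (if (∀ x, Even (cnt6 a b c d e f x)) then (1/64:ℝ) else 0)
    = (1/64) * ((J i a b * J j c d * J k e f) * (if a=c∧b=e∧d=f then (1:ℝ) else 0)
      + (J i a b * J j c d * J k e f) * (if a=c∧b=f∧d=e then (1:ℝ) else 0)
      + (J i a b * J j c d * J k e f) * (if a=d∧b=e∧c=f then (1:ℝ) else 0)
      + (J i a b * J j c d * J k e f) * (if a=d∧b=f∧c=e then (1:ℝ) else 0)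
      + (J i a b * J j c d * J k e f) * (if a=e∧b=c∧d=f then (1:ℝ) else 0)
      + (J i a b * J j c d * J k e f) * (if a=e∧b=d∧c=f then (1:ℝ) else 0)
      + (J i a b * J j c d * J k e f) * (if a=f∧b=c∧d=e then (1:ℝ) else 0)
      + (J i a b * J j c d * J k e f) * (if a=f∧b=d∧c=e then (1:ℝ) else 0)) := by
  by_cases hab : a = b
  · subst hab; simp [hd]
  by_cases hcd : c = d
  · subst hcd; simp [hd]
  by_cases hef : e = f
  · subst hef; simp [hd]
  rw [ind_eq_sum hab hcd hef]; ring

lemma innerSumJ (J : Fin N → Fin N → Fin N → ℝ) (hsym : ∀ i j k, J i j k = J i k j)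
    (hd : ∀ i x, J i x x = 0) (i j k : Fin N) :
    ∑ a, ∑ b, ∑ c, ∑ d, ∑ e, ∑ f, (J i a b * J j c d * J k e f)
        * (if (∀ x, Even (cnt6 a b c d e f x)) then (1/64:ℝ) else 0)
      = (1/8) * ∑ l, ∑ m, ∑ n, J i l m * J j m n * J k n l := by
  simp only [point J hd i j k]
  simp only [← Finset.mul_sum]
  simp only [Finset.sum_add_distrib]
  rw [col1 J hsym i j k, col2 J hsym i j k, col3 J hsym i j k, col4 J hsym i j k,
    col5 J hsym i j k, col6 J hsym i j k, col7 J hsym i j k, col8 J hsym i j k]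
  ring

end Main

theorem stmt5 (N D : ℕ) (hN : 0 < N) (hD : 0 < D)
    (J : Fin N → Fin N → Fin N → ℝ) (hJ : IsMax3Lin2 N D J) :
    expect N (fun v => ∑ i, ∑ j, ∑ k, J i j k * force J v i * force J v j * force J v k)
      = (1 / 64) * (∑ i, ∑ j, ∑ k, ∑ l, ∑ m, ∑ n,
          J i j k * J i l m * J j m n * J k n l) := by
  obtain ⟨hval, hs1, hs2, hdiag, hdeg⟩ := hJ
  have hd : ∀ i x, J i x x = 0 := fun i x => hdiag i x x (Or.inr (Or.inr rfl))
  simp only [expect_sum']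
  simp only [term_eval J]
  simp only [innerSumJ J hs2 hd]
  simp only [Finset.mul_sum]
  refine Finset.sum_congr rfl fun i _ => Finset.sum_congr rfl fun j _ =>
    Finset.sum_congr rfl fun k _ => Finset.sum_congr rfl fun l _ =>
    Finset.sum_congr rfl fun m _ => Finset.sum_congr rfl fun n _ => ?_
  ring
end

section
/- |Σ_{i,j,k,l,m,n} J(i,j,k)·J(i,l,m)·J(j,m,n)·J(k,n,l)| ≤ 2·D·N·(2·D)^{3/2}, where the sum ranges over all six-tuples of indices in Fin N. -/
open Finset

lemma abs_sum_mul_le {ι : Type*} [Fintype ι] (f g : ι → ℝ) :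
    |∑ i, f i * g i| ≤ Real.sqrt (∑ i, f i ^ 2) * Real.sqrt (∑ i, g i ^ 2) := by
  rw [← Real.sqrt_sq_eq_abs, ← Real.sqrt_mul (by positivity)]
  exact Real.sqrt_le_sqrt (sum_mul_sq_le_sq_mul_sq _ f g)

lemma cs3 {N : ℕ} (a b c : Fin N → Fin N → ℝ) :
    |∑ l, ∑ m, ∑ n, a l m * b m n * c n l| ≤
      Real.sqrt (∑ l, ∑ m, (a l m) ^ 2) * Real.sqrt (∑ m, ∑ n, (b m n) ^ 2) *
        Real.sqrt (∑ n, ∑ l, (c n l) ^ 2) := by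
  set T : Fin N → Fin N → ℝ := fun m l => ∑ n, b m n * c n l with hT
  have h1 : ∑ l, ∑ m, ∑ n, a l m * b m n * c n l
      = ∑ p : Fin N × Fin N, a p.1 p.2 * T p.2 p.1 := by
    rw [Fintype.sum_prod_type]
    refine Finset.sum_congr rfl fun l _ => Finset.sum_congr rfl fun m _ => ?_
    rw [hT, Finset.mul_sum]
    exact Finset.sum_congr rfl fun n _ => by ring
  have h2 : ∑ p : Fin N × Fin N, (T p.2 p.1) ^ 2 ≤
      (∑ m, ∑ n, (b m n) ^ 2) * (∑ n, ∑ l, (c n l) ^ 2) := by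
    rw [Fintype.sum_prod_type]
    calc ∑ l, ∑ m, (T m l) ^ 2
        ≤ ∑ l, ∑ m, (∑ n, (b m n) ^ 2) * (∑ n, (c n l) ^ 2) := by
          refine Finset.sum_le_sum fun l _ => Finset.sum_le_sum fun m _ => ?_
          exact sum_mul_sq_le_sq_mul_sq _ _ _
      _ = (∑ m, ∑ n, (b m n) ^ 2) * (∑ n, ∑ l, (c n l) ^ 2) := by
          rw [Finset.sum_comm (s := Finset.univ) (t := Finset.univ)
            (f := fun n l => (c n l) ^ 2)]
          rw [Finset.sum_comm (s := Finset.univ) (t := Finset.univ)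
            (f := fun l m => (∑ n, (b m n) ^ 2) * (∑ n, (c n l) ^ 2))]
          rw [Finset.sum_mul_sum]
  calc |∑ l, ∑ m, ∑ n, a l m * b m n * c n l|
      = |∑ p : Fin N × Fin N, a p.1 p.2 * T p.2 p.1| := by rw [h1]
    _ ≤ Real.sqrt (∑ p : Fin N × Fin N, (a p.1 p.2) ^ 2) *
          Real.sqrt (∑ p : Fin N × Fin N, (T p.2 p.1) ^ 2) := abs_sum_mul_le _ _
    _ ≤ Real.sqrt (∑ l, ∑ m, (a l m) ^ 2) *
          (Real.sqrt (∑ m, ∑ n, (b m n) ^ 2) * Real.sqrt (∑ n, ∑ l, (c n l) ^ 2)) := by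
        refine mul_le_mul (le_of_eq (by rw [Fintype.sum_prod_type])) ?_
          (Real.sqrt_nonneg _) (Real.sqrt_nonneg _)
        calc Real.sqrt (∑ p : Fin N × Fin N, (T p.2 p.1) ^ 2)
            ≤ Real.sqrt ((∑ m, ∑ n, (b m n) ^ 2) * (∑ n, ∑ l, (c n l) ^ 2)) :=
              Real.sqrt_le_sqrt h2
          _ = _ := Real.sqrt_mul (by positivity) _
    _ = _ := by ring

/-- `|∑_{i,j,k,l,m,n} J(i,j,k)·J(i,l,m)·J(j,m,n)·J(k,n,l)|
  ≤ 2·D·N·(2·D)^(3/2)`. -/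
theorem stmt6 (N D : ℕ) (hN : 0 < N) (hD : 0 < D)
    (J : Fin N → Fin N → Fin N → ℝ) (hJ : IsMax3Lin2 N D J) :
    |∑ i, ∑ j, ∑ k, ∑ l, ∑ m, ∑ n, J i j k * J i l m * J j m n * J k n l|
      ≤ 2 * (D : ℝ) * N * (2 * (D : ℝ)) ^ ((3 : ℝ) / 2) := by
  obtain ⟨hval, -, -, -, hdeg⟩ := hJ
  have hDpos : (0 : ℝ) < D := by exact_mod_cast hD
  have hBpos : (0 : ℝ) < 2 * (D : ℝ) := by positivity
  set B32 : ℝ := (2 * (D : ℝ)) ^ ((3 : ℝ) / 2) with hB32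
  have hpow : Real.sqrt (2 * (D : ℝ)) * Real.sqrt (2 * (D : ℝ)) *
      Real.sqrt (2 * (D : ℝ)) = B32 := by
    rw [hB32, Real.sqrt_eq_rpow, ← Real.rpow_add hBpos, ← Real.rpow_add hBpos]
    norm_num
  have hS : ∀ i j k : Fin N, |∑ l, ∑ m, ∑ n, J i l m * J j m n * J k n l| ≤ B32 := by
    intro i j k
    have h := cs3 (J i) (J j) (J k)
    rwa [hdeg i, hdeg j, hdeg k, hpow] at h
  have hfact : ∀ i j k : Fin N, ∑ l, ∑ m, ∑ n, J i j k * J i l m * J j m n * J k n l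
      = J i j k * ∑ l, ∑ m, ∑ n, J i l m * J j m n * J k n l := by
    intro i j k
    simp_rw [Finset.mul_sum]
    exact Finset.sum_congr rfl fun l _ => Finset.sum_congr rfl fun m _ =>
      Finset.sum_congr rfl fun n _ => by ring
  have habs : ∀ i j k : Fin N, |J i j k| = (J i j k) ^ 2 := by
    intro i j k
    rcases hval i j k with h | h | h <;> rw [h] <;> norm_num
  calc |∑ i, ∑ j, ∑ k, ∑ l, ∑ m, ∑ n, J i j k * J i l m * J j m n * J k n l|
      = |∑ i, ∑ j, ∑ k, J i j k * ∑ l, ∑ m, ∑ n, J i l m * J j m n * J k n l| := by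
        simp_rw [hfact]
    _ ≤ ∑ i, ∑ j, ∑ k, |J i j k * ∑ l, ∑ m, ∑ n, J i l m * J j m n * J k n l| := by
        refine le_trans (Finset.abs_sum_le_sum_abs _ _) (Finset.sum_le_sum fun i _ => ?_)
        refine le_trans (Finset.abs_sum_le_sum_abs _ _) (Finset.sum_le_sum fun j _ => ?_)
        exact Finset.abs_sum_le_sum_abs _ _
    _ ≤ ∑ i, ∑ j, ∑ k, (J i j k) ^ 2 * B32 := by
        refine Finset.sum_le_sum fun i _ => Finset.sum_le_sum fun j _ =>
          Finset.sum_le_sum fun k _ => ?_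
        rw [abs_mul, ← habs i j k]
        exact mul_le_mul_of_nonneg_left (hS i j k) (abs_nonneg _)
    _ = ∑ i : Fin N, (2 * (D : ℝ)) * B32 := by
        refine Finset.sum_congr rfl fun i _ => ?_
        simp_rw [← Finset.sum_mul]
        rw [hdeg i]
    _ = 2 * (D : ℝ) * N * B32 := by
        rw [Finset.sum_const, Finset.card_univ, Fintype.card_fin, nsmul_eq_mul]
        ring
end

section
/- Let c = 0.599 and let v_i, v_j, u₁, u₂, w₁, w₂ be six independent random variables, each uniform on the four-point set {−1, −1/3, 1/3, 1}. Then almost surely v_i − c·(v_j + u₁ + u₂) ≠ 0 and v_j − c·(v_i + w₁ + w₂) ≠ 0, and 𝔼[−(1/2)·sgn(v_i − c·(v_j + u₁ + u₂))·sgn(v_j − c·(v_i + w₁ + w₂))] > (1/(2·√3))·(2/3) = 1/(3·√3). Hence for degree D = 3, the one-step local tensor algorithm with initial values drawn uniformly from {−1, −1/3, 1/3, 1} and update coefficient c = 0.599 strictly outperforms the optimal one-step QAOA on triangle-free 3-regular graphs. -/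
/-- The four-point set `{−1, −1/3, 1/3, 1}` of initial values, indexed by `Fin 4`. -/
noncomputable def val4 : Fin 4 → ℝ := ![(-1 : ℝ), -1 / 3, 1 / 3, 1]


def nv : Fin 4 → ℤ := ![-3, -1, 1, 3]
def sgnz (m : ℤ) : ℤ := if m < 0 then -1 else if 0 < m then 1 else 0

lemma val4_eq (a : Fin 4) : val4 a = (nv a : ℝ) / 3 := by
  fin_cases a <;> norm_num [val4, nv]

lemma key (a b c₁ c₂ : Fin 4) :
    ((1000 * nv a - 599 * (nv b + nv c₁ + nv c₂) : ℤ) : ℝ)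
      = 3000 * (val4 a - 0.599 * (val4 b + val4 c₁ + val4 c₂)) := by
  rw [val4_eq a, val4_eq b, val4_eq c₁, val4_eq c₂]
  push_cast
  norm_num
  ring

lemma nzk (a b c₁ c₂ : Fin 4) : (1000 * nv a - 599 * (nv b + nv c₁ + nv c₂) : ℤ) ≠ 0 := by
  fin_cases a <;> fin_cases b <;> fin_cases c₁ <;> fin_cases c₂ <;> decide

lemma nz' (a b c₁ c₂ : Fin 4) : val4 a - 0.599 * (val4 b + val4 c₁ + val4 c₂) ≠ 0 := by
  intro h
  have hk := key a b c₁ c₂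
  rw [h, mul_zero] at hk
  exact nzk a b c₁ c₂ (by exact_mod_cast hk)

lemma sign_eq (x : ℝ) (m : ℤ) (h : (m : ℝ) = 3000 * x) : Real.sign x = (sgnz m : ℝ) := by
  unfold sgnz
  rcases lt_trichotomy m 0 with h1 | h1 | h1
  · have hx : x < 0 := by nlinarith [show (m:ℝ) < 0 from by exact_mod_cast h1]
    rw [Real.sign_of_neg hx]; simp [h1]
  · have hx : x = 0 := by nlinarith [show (m:ℝ) = 0 from by exact_mod_cast h1]
    simp [hx, Real.sign_zero, h1]
  · have hx : 0 < x := by nlinarith [show (0:ℝ) < m from by exact_mod_cast h1]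
    rw [Real.sign_of_pos hx]
    rw [if_neg (by omega), if_pos h1]; norm_num

lemma zsum : (∑ a : Fin 4, ∑ b : Fin 4, ∑ c₁ : Fin 4, ∑ c₂ : Fin 4, ∑ d₁ : Fin 4, ∑ d₂ : Fin 4,
    -(sgnz (1000 * nv a - 599 * (nv b + nv c₁ + nv c₂))
      * sgnz (1000 * nv b - 599 * (nv a + nv d₁ + nv d₂)))) = 1600 := by decide

/-- Let `c = 0.599` and let `v_i, v_j, u₁, u₂, w₁, w₂` be six
independent random variables, each uniform on `{−1, −1/3, 1/3, 1}` (modeled by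
averaging over all `4⁶` tuples).  Then almost surely
`v_i − c·(v_j + u₁ + u₂) ≠ 0` and `v_j − c·(v_i + w₁ + w₂) ≠ 0`, and
`𝔼[−(1/2)·sgn(v_i − c·(v_j + u₁ + u₂))·sgn(v_j − c·(v_i + w₁ + w₂))]
  > (1/(2·√3))·(2/3) = 1/(3·√3)`.  Hence for degree `D = 3`, the one-step local
tensor algorithm with these initial values and update coefficient `c = 0.599`
strictly outperforms the optimal one-step QAOA on triangle-free 3-regular graphs. -/
theorem stmt19 :
    (∀ a b c₁ c₂ d₁ d₂ : Fin 4,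
        val4 a - 0.599 * (val4 b + val4 c₁ + val4 c₂) ≠ 0 ∧
        val4 b - 0.599 * (val4 a + val4 d₁ + val4 d₂) ≠ 0) ∧
    (∑ a : Fin 4, ∑ b : Fin 4, ∑ c₁ : Fin 4, ∑ c₂ : Fin 4, ∑ d₁ : Fin 4, ∑ d₂ : Fin 4,
        (-(1 / 2 : ℝ)) * Real.sign (val4 a - 0.599 * (val4 b + val4 c₁ + val4 c₂))
          * Real.sign (val4 b - 0.599 * (val4 a + val4 d₁ + val4 d₂))) / 4 ^ 6
      > (1 / (2 * Real.sqrt 3)) * (2 / 3) ∧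
    (1 / (2 * Real.sqrt 3)) * (2 / 3) = 1 / (3 * Real.sqrt 3) := by
  refine ⟨fun a b c₁ c₂ d₁ d₂ => ⟨nz' a b c₁ c₂, nz' b a d₁ d₂⟩, ?_, ?_⟩
  · have main : (∑ a : Fin 4, ∑ b : Fin 4, ∑ c₁ : Fin 4, ∑ c₂ : Fin 4, ∑ d₁ : Fin 4, ∑ d₂ : Fin 4,
        (-(1 / 2 : ℝ)) * Real.sign (val4 a - 0.599 * (val4 b + val4 c₁ + val4 c₂))
          * Real.sign (val4 b - 0.599 * (val4 a + val4 d₁ + val4 d₂))) = 800 := by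
      have step : (∑ a : Fin 4, ∑ b : Fin 4, ∑ c₁ : Fin 4, ∑ c₂ : Fin 4, ∑ d₁ : Fin 4, ∑ d₂ : Fin 4,
          (-(1 / 2 : ℝ)) * Real.sign (val4 a - 0.599 * (val4 b + val4 c₁ + val4 c₂))
            * Real.sign (val4 b - 0.599 * (val4 a + val4 d₁ + val4 d₂)))
          = ∑ a : Fin 4, ∑ b : Fin 4, ∑ c₁ : Fin 4, ∑ c₂ : Fin 4, ∑ d₁ : Fin 4, ∑ d₂ : Fin 4,
            ((-(sgnz (1000 * nv a - 599 * (nv b + nv c₁ + nv c₂))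
              * sgnz (1000 * nv b - 599 * (nv a + nv d₁ + nv d₂))) : ℤ) : ℝ) / 2 := by
        refine Finset.sum_congr rfl fun a _ => Finset.sum_congr rfl fun b _ =>
          Finset.sum_congr rfl fun c₁ _ => Finset.sum_congr rfl fun c₂ _ =>
          Finset.sum_congr rfl fun d₁ _ => Finset.sum_congr rfl fun d₂ _ => ?_
        rw [sign_eq _ _ (key a b c₁ c₂), sign_eq _ _ (key b a d₁ d₂)]
        push_cast
        ring
      rw [step]
      simp only [← Finset.sum_div, ← Int.cast_sum]
      rw [zsum]
      norm_num
    rw [main]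
    have hs : (1.71 : ℝ) < Real.sqrt 3 := by
      have := Real.sq_sqrt (by norm_num : (3:ℝ) ≥ 0)
      nlinarith [Real.sqrt_nonneg 3]
    have hpos : (0:ℝ) < Real.sqrt 3 := by linarith
    rw [gt_iff_lt, show (1 / (2 * Real.sqrt 3)) * (2 / 3) = 1 / (3 * Real.sqrt 3) by ring,
      div_lt_div_iff₀ (by positivity) (by norm_num)]
    nlinarith
  · ring
end
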